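/- arXiv:2409.18359 — 2 statements merged into one kernel-verified Lean document; each statement's English description precedes it below -/
import Mathlib

section
/- Fix $w \in \mathbb{R}^d$ and let $p$ be a probability measure on $\mathbb{R}^d$. Assume there exists a unique closest point $w^\ast = \arg\min_{u \in \mathrm{supp}(p)} |w - u|$ in the support of $p$. Let $D_{\mathrm{opt}}(w;\sigma) = \frac{\int u\, e^{-|u-w|^2/2\sigma^2}\, p(du)}{\int e^{-|u-w|^2/2\sigma^2}\, p(du)}$ denote the optimal denoiser (posterior mean). Then $D_{\mathrm{opt}}(w;\sigma) \to w^\ast$ as $\sigma \to 0$. -/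
open MeasureTheory Filter
open scoped NNReal ENNReal Topology

/-- The optimal denoiser (posterior mean of the clean sample given the
Gaussian-noised observation `w`) for a data distribution `p`. -/
noncomputable def Dopt {d : ℕ} (p : Measure (EuclideanSpace ℝ (Fin d))) (σ : ℝ)
    (w : EuclideanSpace ℝ (Fin d)) : EuclideanSpace ℝ (Fin d) :=
  (∫ u, Real.exp (-‖u - w‖ ^ 2 / (2 * σ ^ 2)) ∂p)⁻¹ •
    ∫ u, Real.exp (-‖u - w‖ ^ 2 / (2 * σ ^ 2)) • u ∂p

/-- The (topological) support of a measure: the set of points all of whose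
neighbourhoods have positive measure. -/
def msupport {d : ℕ} (p : Measure (EuclideanSpace ℝ (Fin d))) :
    Set (EuclideanSpace ℝ (Fin d)) :=
  {x | ∀ ε > 0, p (Metric.ball x ε) ≠ 0}

section Aux

variable {d : ℕ} (p : Measure (EuclideanSpace ℝ (Fin d)))

lemma msupport_isClosed : IsClosed (msupport p) := by
  rw [← isOpen_compl_iff, Metric.isOpen_iff]
  intro x hx
  simp only [msupport, Set.mem_compl_iff, Set.mem_setOf_eq, not_forall] at hx
  obtain ⟨ε, hε, hx⟩ := hx
  simp only [ne_eq, not_not] at hx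
  refine ⟨ε / 2, by linarith, fun y hy => ?_⟩
  simp only [msupport, Set.mem_compl_iff, Set.mem_setOf_eq, not_forall]
  refine ⟨ε / 2, by linarith, ?_⟩
  simp only [ne_eq, not_not]
  refine measure_mono_null (fun z hz => ?_) hx
  have := Metric.mem_ball.1 hz
  have := Metric.mem_ball.1 hy
  exact Metric.mem_ball.2 (by calc dist z x ≤ dist z y + dist y x := dist_triangle _ _ _
    _ < ε := by linarith)

lemma msupport_ae : ∀ᵐ u ∂p, u ∈ msupport p := by
  rw [ae_iff]
  refine measure_null_of_locally_null _ (fun x hx => ?_)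
  simp only [Set.mem_setOf_eq, msupport, not_forall] at hx
  obtain ⟨ε, hε, hx⟩ := hx
  simp only [ne_eq, not_not] at hx
  exact ⟨Metric.ball x ε, mem_nhdsWithin_of_mem_nhds (Metric.ball_mem_nhds x hε), hx⟩

end Aux

/-- Fix `w`. If there is a unique closest point `w⋆` to `w` in
the support of `p` (and `p` has a finite first moment so that the posterior
mean is well-defined), then the optimal denoiser converges to `w⋆` as `σ → 0⁺`:
in the zero-noise limit the denoiser projects onto the data support. -/
theorem optimal_denoiser_tendsto_closest_point
    {d : ℕ} (p : Measure (EuclideanSpace ℝ (Fin d))) [IsProbabilityMeasure p]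
    (hmom : Integrable (fun u => u) p)
    (w wstar : EuclideanSpace ℝ (Fin d))
    (hmem : wstar ∈ msupport p)
    (hclosest : ∀ u ∈ msupport p, dist w wstar ≤ dist w u)
    (huniq : ∀ u ∈ msupport p, dist w u = dist w wstar → u = wstar) :
    Tendsto (fun σ => Dopt p σ w) (𝓝[>] (0 : ℝ)) (𝓝 wstar) := by
  set R : ℝ := dist w wstar with hR
  have hR0 : 0 ≤ R := dist_nonneg
  -- basic integrability facts
  have hfc : ∀ σ : ℝ, Continuous (fun u : EuclideanSpace ℝ (Fin d) =>
      Real.exp (-‖u - w‖ ^ 2 / (2 * σ ^ 2))) := by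
    intro σ
    exact Real.continuous_exp.comp (((continuous_norm.comp
      (continuous_id.sub continuous_const)).pow 2).neg.div_const _)
  have hfpos : ∀ (σ : ℝ) (u : EuclideanSpace ℝ (Fin d)),
      0 < Real.exp (-‖u - w‖ ^ 2 / (2 * σ ^ 2)) := fun σ u => Real.exp_pos _
  have hfle1 : ∀ σ : ℝ, 0 < σ → ∀ u : EuclideanSpace ℝ (Fin d),
      Real.exp (-‖u - w‖ ^ 2 / (2 * σ ^ 2)) ≤ 1 := by
    intro σ hσ u
    rw [← Real.exp_zero]
    apply Real.exp_le_exp.2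
    apply div_nonpos_of_nonpos_of_nonneg
    · simp [sq_nonneg]
    · positivity
  have hint1 : ∀ σ : ℝ, 0 < σ → Integrable (fun u : EuclideanSpace ℝ (Fin d) =>
      Real.exp (-‖u - w‖ ^ 2 / (2 * σ ^ 2))) p := by
    intro σ hσ
    refine Integrable.mono' (integrable_const 1) (hfc σ).aestronglyMeasurable
      (ae_of_all _ fun u => ?_)
    rw [Real.norm_eq_abs, abs_of_pos (hfpos σ u)]
    exact hfle1 σ hσ u
  have hintsub : Integrable (fun u : EuclideanSpace ℝ (Fin d) => u - wstar) p :=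
    hmom.sub (integrable_const wstar)
  have hint2 : ∀ σ : ℝ, 0 < σ → Integrable (fun u : EuclideanSpace ℝ (Fin d) =>
      Real.exp (-‖u - w‖ ^ 2 / (2 * σ ^ 2)) • (u - wstar)) p := by
    intro σ hσ
    refine Integrable.mono' hintsub.norm
      (((hfc σ).aestronglyMeasurable).smul hintsub.aestronglyMeasurable)
      (ae_of_all _ fun u => ?_)
    rw [norm_smul, Real.norm_eq_abs, abs_of_pos (hfpos σ u)]
    calc Real.exp (-‖u - w‖ ^ 2 / (2 * σ ^ 2)) * ‖u - wstar‖
        ≤ 1 * ‖u - wstar‖ := by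
          apply mul_le_mul_of_nonneg_right (hfle1 σ hσ u) (norm_nonneg _)
      _ = ‖u - wstar‖ := one_mul _
  have hint3 : ∀ σ : ℝ, 0 < σ → Integrable (fun u : EuclideanSpace ℝ (Fin d) =>
      Real.exp (-‖u - w‖ ^ 2 / (2 * σ ^ 2)) • u) p := by
    intro σ hσ
    refine Integrable.mono' hmom.norm
      (((hfc σ).aestronglyMeasurable).smul hmom.aestronglyMeasurable)
      (ae_of_all _ fun u => ?_)
    rw [norm_smul, Real.norm_eq_abs, abs_of_pos (hfpos σ u)]
    calc Real.exp (-‖u - w‖ ^ 2 / (2 * σ ^ 2)) * ‖u‖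
        ≤ 1 * ‖u‖ := mul_le_mul_of_nonneg_right (hfle1 σ hσ u) (norm_nonneg _)
      _ = ‖u‖ := one_mul _
  -- positivity of the denominator
  have hIpos : ∀ σ : ℝ, 0 < σ →
      0 < ∫ u, Real.exp (-‖u - w‖ ^ 2 / (2 * σ ^ 2)) ∂p := by
    intro σ hσ
    rw [integral_pos_iff_support_of_nonneg (fun u => (hfpos σ u).le) (hint1 σ hσ)]
    have : (Function.support fun u : EuclideanSpace ℝ (Fin d) =>
        Real.exp (-‖u - w‖ ^ 2 / (2 * σ ^ 2))) = Set.univ := by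
      ext u; simp [Function.support, (hfpos σ u).ne']
    rw [this]
    simp
  -- the gap lemma
  have hgap : ∀ ε : ℝ, 0 < ε → ∃ R' : ℝ, R < R' ∧
      ∀ u ∈ msupport p, ε ≤ dist u wstar → R' ≤ dist w u := by
    intro ε hε
    set K : Set (EuclideanSpace ℝ (Fin d)) :=
      msupport p ∩ Metric.closedBall w (2 * R + 1) ∩ {u | ε ≤ dist u wstar} with hK
    have hKcl : IsClosed K :=
      ((msupport_isClosed p).inter Metric.isClosed_closedBall).inter
        (isClosed_le continuous_const (continuous_id.dist continuous_const))
    have hKcp : IsCompact K :=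
      (isCompact_closedBall w (2 * R + 1)).of_isClosed_subset hKcl
        (fun u hu => hu.1.2)
    rcases K.eq_empty_or_nonempty with hKe | hKne
    · refine ⟨R + 1, by linarith, fun u hu hud => ?_⟩
      by_cases hball : u ∈ Metric.closedBall w (2 * R + 1)
      · exfalso
        have : u ∈ K := ⟨⟨hu, hball⟩, hud⟩
        rw [hKe] at this; exact this
      · have : 2 * R + 1 < dist w u := by
          rw [Metric.mem_closedBall] at hball
          push_neg at hball
          rwa [dist_comm] at hball
        linarith
    · obtain ⟨u0, hu0K, hu0min⟩ := hKcp.exists_isMinOn hKne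
        ((continuous_const.dist continuous_id).continuousOn (f := fun u => dist w u))
      have hu0supp : u0 ∈ msupport p := hu0K.1.1
      have hm : R < dist w u0 := by
        rcases lt_or_eq_of_le (hclosest u0 hu0supp) with h | h
        · exact h
        · exfalso
          have := huniq u0 hu0supp h.symm
          have hd := hu0K.2
          rw [this] at hd
          simp only [Set.mem_setOf_eq, dist_self] at hd
          linarith
      refine ⟨min (dist w u0) (R + 1), lt_min hm (by linarith), fun u hu hud => ?_⟩
      by_cases hball : u ∈ Metric.closedBall w (2 * R + 1)
      · have : u ∈ K := ⟨⟨hu, hball⟩, hud⟩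
        exact le_trans (min_le_left _ _) (hu0min this)
      · have : 2 * R + 1 < dist w u := by
          rw [Metric.mem_closedBall] at hball
          push_neg at hball
          rwa [dist_comm] at hball
        calc min (dist w u0) (R + 1) ≤ R + 1 := min_le_right _ _
          _ ≤ dist w u := by linarith
  -- main convergence via the metric characterization
  rw [Metric.tendsto_nhds]
  intro ε' hε'
  set ε : ℝ := ε' / 2 with hεdef
  have hε : 0 < ε := by positivity
  obtain ⟨R', hR', hgapR'⟩ := hgap ε hε
  set η : ℝ := (R' - R) / 2 with hηdef
  have hη : 0 < η := by simp only [hηdef]; linarith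
  have hRη : R + η < R' := by simp only [hηdef]; linarith
  set b : ℝ := (p (Metric.ball wstar η)).toReal with hb
  have hbpos : 0 < b := by
    refine ENNReal.toReal_pos (hmem η hη) (measure_ne_top p _)
  set C : ℝ := ∫ u, ‖u - wstar‖ ∂p with hC
  have hCnn : 0 ≤ C := integral_nonneg (fun u => norm_nonneg _)
  set a : ℝ := R' ^ 2 - (R + η) ^ 2 with ha
  have hapos : 0 < a := by
    have h1 : 0 ≤ R + η := by positivity
    nlinarith
  -- key pointwise-in-σ bound on the distance
  have hkey : ∀ σ : ℝ, 0 < σ →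
      dist (Dopt p σ w) wstar ≤ ε + (C / b) * Real.exp (-a / (2 * σ ^ 2)) := by
    intro σ hσ
    set f : EuclideanSpace ℝ (Fin d) → ℝ :=
      fun u => Real.exp (-‖u - w‖ ^ 2 / (2 * σ ^ 2)) with hf
    set I : ℝ := ∫ u, f u ∂p with hI
    have hIp : 0 < I := hIpos σ hσ
    set c : ℝ := Real.exp (-(R + η) ^ 2 / (2 * σ ^ 2)) with hc
    have hcpos : 0 < c := Real.exp_pos _
    -- lower bound on the denominator
    have hIlb : b * c ≤ I := by
      have hball : MeasurableSet (Metric.ball wstar η) := measurableSet_ball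
      have h1 : c * (p (Metric.ball wstar η)).toReal ≤ ∫ u in Metric.ball wstar η, f u ∂p := by
        refine setIntegral_ge_of_const_le_real hball (measure_ne_top p _) (fun u hu => ?_)
          ((hint1 σ hσ).integrableOn)
        rw [hf]
        apply Real.exp_le_exp.2
        apply div_le_div_of_nonneg_right _ (by positivity)
        · rw [neg_le_neg_iff]
          have hd : dist u w ≤ R + η := by
            calc dist u w ≤ dist u wstar + dist wstar w := dist_triangle _ _ _
              _ ≤ η + R := by
                  have := Metric.mem_ball.1 hu
                  rw [dist_comm wstar w]
                  linarith
              _ = R + η := by ring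
          have h2 : ‖u - w‖ = dist u w := by rw [dist_eq_norm]
          rw [h2]
          nlinarith [dist_nonneg (x := u) (y := w)]
      have h2 : ∫ u in Metric.ball wstar η, f u ∂p ≤ I :=
        setIntegral_le_integral (hint1 σ hσ) (ae_of_all _ fun u => (hfpos σ u).le)
      calc b * c = c * b := mul_comm _ _
        _ ≤ ∫ u in Metric.ball wstar η, f u ∂p := h1
        _ ≤ I := h2
    -- numerator identity
    set N : EuclideanSpace ℝ (Fin d) := ∫ u, f u • (u - wstar) ∂p with hN
    have hDid : Dopt p σ w - wstar = I⁻¹ • N := by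
      have h1 : N = (∫ u, f u • u ∂p) - I • wstar := by
        rw [hN]
        have : (fun u : EuclideanSpace ℝ (Fin d) => f u • (u - wstar))
            = fun u => f u • u - f u • wstar := by
          funext u; rw [smul_sub]
        rw [this, integral_sub (hint3 σ hσ) _]
        · rw [integral_smul_const]
        · exact (Integrable.smul_const (hint1 σ hσ) wstar)
      rw [h1, smul_sub, smul_smul, inv_mul_cancel₀ hIp.ne', one_smul]
      rfl
    -- bound on the numerator
    have hNb : ‖N‖ ≤ ε * I + Real.exp (-R' ^ 2 / (2 * σ ^ 2)) * C := by
      have h1 : ‖N‖ ≤ ∫ u, ‖f u • (u - wstar)‖ ∂p := norm_integral_le_integral_norm _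
      have h2 : ∫ u, ‖f u • (u - wstar)‖ ∂p ≤
          ∫ u, (ε * f u + Real.exp (-R' ^ 2 / (2 * σ ^ 2)) * ‖u - wstar‖) ∂p := by
        refine integral_mono_of_nonneg (ae_of_all _ fun u => norm_nonneg _)
          (((hint1 σ hσ).const_mul ε).add (hintsub.norm.const_mul _)) ?_
        filter_upwards [msupport_ae p] with u hu
        rw [norm_smul, Real.norm_eq_abs, abs_of_pos (hfpos σ u)]
        by_cases hnear : dist u wstar < ε
        · have : ‖u - wstar‖ < ε := by rwa [← dist_eq_norm]
          have hfa : 0 < f u := hfpos σ u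
          have : f u * ‖u - wstar‖ ≤ ε * f u := by
            rw [mul_comm (ε) (f u)]
            exact mul_le_mul_of_nonneg_left this.le hfa.le
          calc f u * ‖u - wstar‖ ≤ ε * f u := this
            _ ≤ ε * f u + Real.exp (-R' ^ 2 / (2 * σ ^ 2)) * ‖u - wstar‖ := by
                have : 0 ≤ Real.exp (-R' ^ 2 / (2 * σ ^ 2)) * ‖u - wstar‖ :=
                  mul_nonneg (Real.exp_pos _).le (norm_nonneg _)
                linarith
        · push_neg at hnear
          have hfar := hgapR' u hu hnear
          have hfb : f u ≤ Real.exp (-R' ^ 2 / (2 * σ ^ 2)) := by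
            rw [hf]
            apply Real.exp_le_exp.2
            apply div_le_div_of_nonneg_right _ (by positivity)
            rw [neg_le_neg_iff]
            have h2 : ‖u - w‖ = dist w u := by rw [dist_comm, dist_eq_norm]
            rw [h2]
            nlinarith [dist_nonneg (x := w) (y := u), le_trans hR0 hR'.le]
          calc f u * ‖u - wstar‖ ≤ Real.exp (-R' ^ 2 / (2 * σ ^ 2)) * ‖u - wstar‖ :=
                mul_le_mul_of_nonneg_right hfb (norm_nonneg _)
            _ ≤ ε * f u + Real.exp (-R' ^ 2 / (2 * σ ^ 2)) * ‖u - wstar‖ := by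
                have : 0 ≤ ε * f u := mul_nonneg hε.le (hfpos σ u).le
                linarith
      have h3 : ∫ u, (ε * f u + Real.exp (-R' ^ 2 / (2 * σ ^ 2)) * ‖u - wstar‖) ∂p
          = ε * I + Real.exp (-R' ^ 2 / (2 * σ ^ 2)) * C := by
        rw [integral_add ((hint1 σ hσ).const_mul ε) (hintsub.norm.const_mul _),
          integral_const_mul, integral_const_mul]
      calc ‖N‖ ≤ _ := h1
        _ ≤ _ := h2
        _ = _ := h3
    -- put things together
    have hdist : dist (Dopt p σ w) wstar = I⁻¹ * ‖N‖ := by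
      rw [dist_eq_norm, hDid, norm_smul, Real.norm_eq_abs, abs_of_pos (by positivity)]
    rw [hdist]
    have hIinv : 0 < I⁻¹ := by positivity
    have step1 : I⁻¹ * ‖N‖ ≤ I⁻¹ * (ε * I + Real.exp (-R' ^ 2 / (2 * σ ^ 2)) * C) :=
      mul_le_mul_of_nonneg_left hNb hIinv.le
    have step2 : I⁻¹ * (ε * I + Real.exp (-R' ^ 2 / (2 * σ ^ 2)) * C)
        = ε + I⁻¹ * (Real.exp (-R' ^ 2 / (2 * σ ^ 2)) * C) := by
      field_simp
    have step3 : I⁻¹ * (Real.exp (-R' ^ 2 / (2 * σ ^ 2)) * C)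
        ≤ (b * c)⁻¹ * (Real.exp (-R' ^ 2 / (2 * σ ^ 2)) * C) := by
      apply mul_le_mul_of_nonneg_right _ (mul_nonneg (Real.exp_pos _).le hCnn)
      exact inv_anti₀ (by positivity) hIlb
    have step4 : (b * c)⁻¹ * (Real.exp (-R' ^ 2 / (2 * σ ^ 2)) * C)
        = (C / b) * Real.exp (-a / (2 * σ ^ 2)) := by
      rw [ha, hc]
      rw [mul_inv, mul_comm]
      have hexp : Real.exp (-R' ^ 2 / (2 * σ ^ 2)) * (Real.exp (-(R + η) ^ 2 / (2 * σ ^ 2)))⁻¹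
          = Real.exp (-(R' ^ 2 - (R + η) ^ 2) / (2 * σ ^ 2)) := by
        rw [← Real.exp_neg, ← Real.exp_add]
        congr 1
        field_simp
        ring
      calc Real.exp (-R' ^ 2 / (2 * σ ^ 2)) * C * (b⁻¹ * (Real.exp (-(R + η) ^ 2 / (2 * σ ^ 2)))⁻¹)
          = (Real.exp (-R' ^ 2 / (2 * σ ^ 2)) * (Real.exp (-(R + η) ^ 2 / (2 * σ ^ 2)))⁻¹)
              * (C * b⁻¹) := by ring
        _ = Real.exp (-(R' ^ 2 - (R + η) ^ 2) / (2 * σ ^ 2)) * (C * b⁻¹) := by rw [hexp]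
        _ = C / b * Real.exp (-(R' ^ 2 - (R + η) ^ 2) / (2 * σ ^ 2)) := by
            rw [div_eq_mul_inv]; ring
    calc I⁻¹ * ‖N‖ ≤ ε + I⁻¹ * (Real.exp (-R' ^ 2 / (2 * σ ^ 2)) * C) := by
          rw [← step2]; exact step1
      _ ≤ ε + (b * c)⁻¹ * (Real.exp (-R' ^ 2 / (2 * σ ^ 2)) * C) := by linarith
      _ = ε + (C / b) * Real.exp (-a / (2 * σ ^ 2)) := by rw [step4]
  -- the exponential correction term tends to 0
  have htail : Tendsto (fun σ : ℝ => (C / b) * Real.exp (-a / (2 * σ ^ 2)))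
      (𝓝[>] (0 : ℝ)) (𝓝 0) := by
    have h1 : Tendsto (fun σ : ℝ => 2 * σ ^ 2) (𝓝[>] (0 : ℝ)) (𝓝[>] (0 : ℝ)) := by
      apply tendsto_nhdsWithin_iff.2
      constructor
      · have : Tendsto (fun σ : ℝ => 2 * σ ^ 2) (𝓝 (0 : ℝ)) (𝓝 (2 * 0 ^ 2)) := by
          exact (tendsto_id.pow 2).const_mul 2
        simp only [ne_eq, OfNat.ofNat_ne_zero, not_false_eq_true, zero_pow, mul_zero] at this
        exact this.mono_left nhdsWithin_le_nhds
      · filter_upwards [self_mem_nhdsWithin] with σ hσ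
        have : (0 : ℝ) < σ := hσ
        simp only [Set.mem_Ioi]
        positivity
    have h2 : Tendsto (fun σ : ℝ => a / (2 * σ ^ 2)) (𝓝[>] (0 : ℝ)) atTop := by
      have := (tendsto_inv_nhdsGT_zero.comp h1).const_mul_atTop hapos
      refine this.congr (fun σ => ?_)
      simp [div_eq_mul_inv, Function.comp]
    have h3 : Tendsto (fun σ : ℝ => Real.exp (-a / (2 * σ ^ 2))) (𝓝[>] (0 : ℝ)) (𝓝 0) := by
      have : Tendsto (fun σ : ℝ => -(a / (2 * σ ^ 2))) (𝓝[>] (0 : ℝ)) atBot :=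
        tendsto_neg_atTop_atBot.comp h2
      have := Real.tendsto_exp_atBot.comp this
      refine this.congr (fun σ => ?_)
      simp [Function.comp, neg_div]
    have := h3.const_mul (C / b)
    rwa [mul_zero] at this
  have hev : ∀ᶠ σ in 𝓝[>] (0 : ℝ), (C / b) * Real.exp (-a / (2 * σ ^ 2)) < ε := by
    exact htail.eventually (eventually_lt_nhds hε)
  filter_upwards [hev, self_mem_nhdsWithin] with σ h1 h2
  have hσ : (0 : ℝ) < σ := h2
  calc dist (Dopt p σ w) wstar ≤ ε + (C / b) * Real.exp (-a / (2 * σ ^ 2)) := hkey σ hσ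
    _ < ε + ε := by linarith
    _ = ε' := by rw [hεdef]; ring
end

section
/- Let $g(z) = I_1(z)/I_0(z)$ be the quotient of modified Bessel functions of the first kind. Then $g$ satisfies the ODE $g'(z) = 1 - g(z)^2 - \frac{1}{z}g(z)$ for $z > 0$, and $\sup_{z > 0} |z\,g'(z)| < \infty$. Consequently, for $g_\sigma(t) := g(t/\sigma^2)$ and any $\delta > 0$, one has $\mathrm{Lip}(g_\sigma|_{[\delta,\infty)}) \le C/\delta$ with $C = \sup_{z>0}|z g'(z)|$, uniformly in $\sigma > 0$. -/
open MeasureTheory Set Real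

/-- The modified Bessel function of the first kind of order `α`:
`I_α(z) = (1/π) ∫₀^π cos(αθ) e^{z cos θ} dθ`. -/
noncomputable def besselI (α z : ℝ) : ℝ :=
  (1 / π) * ∫ θ in Icc (0 : ℝ) π, Real.cos (α * θ) * Real.exp (z * Real.cos θ)

/-- The Bessel quotient `g(z) = I₁(z)/I₀(z)`. -/
noncomputable def besselQuot (z : ℝ) : ℝ := besselI 1 z / besselI 0 z

noncomputable def bJ (z : ℝ) : ℝ := ∫ θ in (0:ℝ)..π, Real.exp (z * Real.cos θ)
noncomputable def bK (z : ℝ) : ℝ := ∫ θ in (0:ℝ)..π, Real.cos θ * Real.exp (z * Real.cos θ)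
noncomputable def bS (z : ℝ) : ℝ := ∫ θ in (0:ℝ)..π, Real.sin θ ^ 2 * Real.exp (z * Real.cos θ)

lemma contE (z : ℝ) : Continuous fun θ : ℝ => Real.exp (z * Real.cos θ) := by continuity

lemma besselI_zero (z : ℝ) : besselI 0 z = (1/π) * bJ z := by
  unfold besselI bJ
  rw [intervalIntegral.integral_of_le pi_pos.le, integral_Icc_eq_integral_Ioc]
  simp

lemma besselI_one (z : ℝ) : besselI 1 z = (1/π) * bK z := by
  unfold besselI bK
  rw [intervalIntegral.integral_of_le pi_pos.le, integral_Icc_eq_integral_Ioc]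
  simp

lemma besselQuot_eq (z : ℝ) : besselQuot z = bK z / bJ z := by
  rw [besselQuot, besselI_one, besselI_zero,
    mul_div_mul_left _ _ (by positivity : (1:ℝ)/π ≠ 0)]

lemma bJ_pos (z : ℝ) : 0 < bJ z :=
  intervalIntegral.intervalIntegral_pos_of_pos_on
    ((contE z).intervalIntegrable 0 π) (fun x _ => exp_pos _) pi_pos

lemma bK_le_bJ (z : ℝ) : bK z ≤ bJ z := by
  refine intervalIntegral.integral_mono_on pi_pos.le
    (((continuous_cos.mul (contE z))).intervalIntegrable 0 π)
    ((contE z).intervalIntegrable 0 π) (fun x _ => ?_)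
  nlinarith [Real.cos_le_one x, Real.exp_pos (z * Real.cos x)]

lemma bK_nonneg (z : ℝ) (hz : 0 ≤ z) : 0 ≤ bK z := by
  rw [bK]
  set f : ℝ → ℝ := fun θ => Real.cos θ * Real.exp (z * Real.cos θ) with hf
  have hc : Continuous f := by fun_prop
  have hc2 : Continuous fun θ : ℝ => Real.cos θ * Real.exp (-(z * Real.cos θ)) := by fun_prop
  have hsplit : (∫ θ in (0:ℝ)..π, f θ) =
      (∫ θ in (0:ℝ)..(π/2), f θ) + ∫ θ in (π/2:ℝ)..π, f θ :=
    (intervalIntegral.integral_add_adjacent_intervals (hc.intervalIntegrable _ _)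
      (hc.intervalIntegrable _ _)).symm
  have hsub : (∫ θ in (0:ℝ)..(π/2), f (π - θ)) = ∫ θ in (π/2:ℝ)..π, f θ := by
    have h := intervalIntegral.integral_comp_sub_left f π (a := 0) (b := π/2)
    rw [show π - π/2 = π/2 by ring, show π - 0 = π by ring] at h
    exact h
  have hval : ∀ θ : ℝ, f (π - θ) = -(Real.cos θ * Real.exp (-(z * Real.cos θ))) := by
    intro θ
    simp [hf, Real.cos_pi_sub]
  rw [hsplit, ← hsub]
  have h2 : (∫ θ in (0:ℝ)..(π/2), f (π - θ)) =
      - ∫ θ in (0:ℝ)..(π/2), Real.cos θ * Real.exp (-(z * Real.cos θ)) := by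
    rw [← intervalIntegral.integral_neg]
    exact intervalIntegral.integral_congr fun θ _ => hval θ
  rw [h2]
  have key : 0 ≤ ∫ θ in (0:ℝ)..(π/2),
      (Real.cos θ * Real.exp (z * Real.cos θ) - Real.cos θ * Real.exp (-(z * Real.cos θ))) := by
    apply intervalIntegral.integral_nonneg (by positivity)
    intro x hx
    have hx1 : 0 ≤ Real.cos x :=
      Real.cos_nonneg_of_mem_Icc ⟨by linarith [hx.1, pi_pos.le], hx.2⟩
    have : Real.exp (-(z * Real.cos x)) ≤ Real.exp (z * Real.cos x) := by
      apply Real.exp_le_exp.2; nlinarith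
    nlinarith
  rw [intervalIntegral.integral_sub (hc.intervalIntegrable _ _)
    (hc2.intervalIntegrable _ _)] at key
  linarith

/-- Integration by parts: `z · ∫ sin²θ e^{z cos θ} = ∫ cos θ e^{z cos θ}`. -/
lemma bS_eq (z : ℝ) : z * bS z = bK z := by
  rw [bS, bK]
  have hderiv : ∀ θ ∈ Set.uIcc (0:ℝ) π,
      HasDerivAt (fun t => -(Real.sin t * Real.exp (z * Real.cos t)))
        (z * Real.sin θ ^ 2 * Real.exp (z * Real.cos θ)
          - Real.cos θ * Real.exp (z * Real.cos θ)) θ := by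
    intro θ _
    have h1 : HasDerivAt (fun t : ℝ => z * Real.cos t) (z * (-Real.sin θ)) θ :=
      (Real.hasDerivAt_cos θ).const_mul z
    have h2 : HasDerivAt (fun t : ℝ => Real.exp (z * Real.cos t))
        (z * (-Real.sin θ) * Real.exp (z * Real.cos θ)) θ := by
      simpa [mul_comm] using h1.exp
    have h3 := ((Real.hasDerivAt_sin θ).mul h2).neg
    exact h3.congr_deriv (by ring)
  have hcont : Continuous fun θ : ℝ =>
      z * Real.sin θ ^ 2 * Real.exp (z * Real.cos θ)
        - Real.cos θ * Real.exp (z * Real.cos θ) := by fun_prop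
  have := intervalIntegral.integral_eq_sub_of_hasDerivAt hderiv
    (hcont.intervalIntegrable _ _)
  simp only [Real.sin_pi, Real.sin_zero, zero_mul, neg_zero, sub_zero] at this
  rw [intervalIntegral.integral_sub ((by fun_prop : Continuous fun θ:ℝ =>
      z * Real.sin θ ^ 2 * Real.exp (z * Real.cos θ)).intervalIntegrable 0 π)
    ((by fun_prop : Continuous fun θ:ℝ =>
      Real.cos θ * Real.exp (z * Real.cos θ)).intervalIntegrable 0 π)] at this
  have heq : (∫ θ in (0:ℝ)..π, z * (Real.sin θ ^ 2 * Real.exp (z * Real.cos θ)))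
      = ∫ θ in (0:ℝ)..π, z * Real.sin θ ^ 2 * Real.exp (z * Real.cos θ) :=
    intervalIntegral.integral_congr fun θ _ => by ring
  rw [intervalIntegral.integral_const_mul] at heq
  linarith

/-- Differentiation under the integral sign. -/
lemma hasDeriv_param (ψ : ℝ → ℝ) (hψ : Continuous ψ) (hb : ∀ θ, |ψ θ| ≤ 1) (z : ℝ) :
    HasDerivAt (fun x => ∫ θ in (0:ℝ)..π, ψ θ * Real.exp (x * Real.cos θ))
      (∫ θ in (0:ℝ)..π, ψ θ * Real.cos θ * Real.exp (z * Real.cos θ)) z := by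
  have := intervalIntegral.hasDerivAt_integral_of_dominated_loc_of_deriv_le
    (F := fun x θ => ψ θ * Real.exp (x * Real.cos θ))
    (F' := fun x θ => ψ θ * Real.cos θ * Real.exp (x * Real.cos θ))
    (bound := fun _ => Real.exp (|z| + 1)) (μ := volume) (a := 0) (b := π) (x₀ := z)
    (s := Metric.ball z 1) (Metric.ball_mem_nhds z one_pos)
    (Filter.Eventually.of_forall fun x =>
      (Continuous.aestronglyMeasurable (by fun_prop :
        Continuous fun θ => ψ θ * Real.exp (x * Real.cos θ))))
    ((by fun_prop : Continuous fun θ => ψ θ * Real.exp (z * Real.cos θ)).intervalIntegrable _ _)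
    (Continuous.aestronglyMeasurable (by fun_prop :
      Continuous fun θ => ψ θ * Real.cos θ * Real.exp (z * Real.cos θ)))
    (Filter.Eventually.of_forall fun t _ x hx => ?_)
    (intervalIntegrable_const)
    (Filter.Eventually.of_forall fun t _ x _ => ?_)
  · exact this.2
  · have h1 : |x| ≤ |z| + 1 := by
      have := mem_ball_iff_norm.1 hx
      rw [Real.norm_eq_abs] at this
      calc |x| = |z + (x - z)| := by ring_nf
        _ ≤ |z| + |x - z| := abs_add_le _ _
        _ ≤ |z| + 1 := by linarith
    have h2 : x * Real.cos t ≤ |z| + 1 := by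
      calc x * Real.cos t ≤ |x * Real.cos t| := le_abs_self _
        _ = |x| * |Real.cos t| := abs_mul _ _
        _ ≤ (|z| + 1) * 1 := by
            apply mul_le_mul h1 (Real.abs_cos_le_one t) (abs_nonneg _) (by positivity)
        _ = |z| + 1 := mul_one _
    rw [Real.norm_eq_abs, abs_mul, abs_mul]
    calc |ψ t| * |Real.cos t| * |Real.exp (x * Real.cos t)|
        ≤ 1 * 1 * Real.exp (x * Real.cos t) := by
          apply mul_le_mul (mul_le_mul (hb t) (Real.abs_cos_le_one t) (abs_nonneg _)
            (by positivity)) (le_of_eq (abs_of_pos (Real.exp_pos _))) (abs_nonneg _) (by positivity)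
      _ = Real.exp (x * Real.cos t) := by ring
      _ ≤ Real.exp (|z| + 1) := Real.exp_le_exp.2 h2
  · have h1 : HasDerivAt (fun x : ℝ => x * Real.cos t) (Real.cos t) x := by
      simpa using (hasDerivAt_id x).mul_const (Real.cos t)
    have := (h1.exp).const_mul (ψ t)
    exact this.congr_deriv (by ring)

lemma hasDerivAt_bJ (z : ℝ) : HasDerivAt bJ (bK z) z := by
  have h := hasDeriv_param (fun _ => 1) continuous_const (by simp) z
  have e1 : (fun x => ∫ θ in (0:ℝ)..π, (1:ℝ) * Real.exp (x * Real.cos θ)) = bJ := by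
    funext x
    exact intervalIntegral.integral_congr fun θ _ => by ring
  have e2 : (∫ θ in (0:ℝ)..π, (1:ℝ) * Real.cos θ * Real.exp (z * Real.cos θ)) = bK z :=
    intervalIntegral.integral_congr fun θ _ => by ring
  rw [e1, e2] at h
  exact h

lemma hasDerivAt_bK (z : ℝ) : HasDerivAt bK (bJ z - bS z) z := by
  have h := hasDeriv_param Real.cos continuous_cos (fun θ => Real.abs_cos_le_one θ) z
  have e1 : (fun x => ∫ θ in (0:ℝ)..π, Real.cos θ * Real.exp (x * Real.cos θ)) = bK := rfl
  have e2 : (∫ θ in (0:ℝ)..π, Real.cos θ * Real.cos θ * Real.exp (z * Real.cos θ))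
      = bJ z - bS z := by
    have e3 : (∫ θ in (0:ℝ)..π, Real.cos θ * Real.cos θ * Real.exp (z * Real.cos θ))
        = ∫ θ in (0:ℝ)..π, (Real.exp (z * Real.cos θ)
            - Real.sin θ ^ 2 * Real.exp (z * Real.cos θ)) :=
      intervalIntegral.integral_congr fun θ _ => by
        linear_combination Real.exp (z * Real.cos θ) * (Real.sin_sq_add_cos_sq θ)
    rw [e3, intervalIntegral.integral_sub ((contE z).intervalIntegrable 0 π)
      ((by fun_prop : Continuous fun θ:ℝ =>
        Real.sin θ ^ 2 * Real.exp (z * Real.cos θ)).intervalIntegrable 0 π)]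
    rfl
  rw [e1, e2] at h
  exact h

lemma hasDerivAt_besselQuot (z : ℝ) (hz : 0 < z) :
    HasDerivAt besselQuot (1 - besselQuot z ^ 2 - besselQuot z / z) z := by
  have hfun : besselQuot = fun w => bK w / bJ w := funext besselQuot_eq
  have hS : bS z = bK z / z := by
    field_simp
    linarith [bS_eq z]
  have hK : HasDerivAt bK (bJ z - bK z / z) z := by
    have := hasDerivAt_bK z
    rwa [hS] at this
  have hd := hK.div (hasDerivAt_bJ z) (bJ_pos z).ne'
  rw [hfun]
  refine hd.congr_deriv ?_
  have hb := (bJ_pos z).ne'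
  field_simp
  ring

lemma le_exp_half (z : ℝ) : z ≤ Real.exp (z/2) := by
  have h1 := Real.add_one_le_exp (z/2 - 1)
  have h2 : Real.exp (z/2 - 1) * Real.exp 1 = Real.exp (z/2) := by
    rw [← Real.exp_add]; ring_nf
  have h3 : (2:ℝ) ≤ Real.exp 1 := by linarith [Real.add_one_le_exp 1]
  nlinarith [Real.exp_pos (z/2 - 1)]

lemma bJ_lower (z : ℝ) (hz : 0 ≤ z) : π / 3 * Real.exp (z / 2) ≤ bJ z := by
  rw [bJ]
  have hc : Continuous fun θ : ℝ => Real.exp (z * Real.cos θ) := by fun_prop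
  have h3 : (0:ℝ) ≤ π/3 := by positivity
  have h3π : π/3 ≤ π := by linarith [pi_pos]
  have hsplit : (∫ θ in (0:ℝ)..π, Real.exp (z * Real.cos θ)) =
      (∫ θ in (0:ℝ)..(π/3), Real.exp (z * Real.cos θ))
        + ∫ θ in (π/3:ℝ)..π, Real.exp (z * Real.cos θ) :=
    (intervalIntegral.integral_add_adjacent_intervals (hc.intervalIntegrable _ _)
      (hc.intervalIntegrable _ _)).symm
  have h2 : (0:ℝ) ≤ ∫ θ in (π/3:ℝ)..π, Real.exp (z * Real.cos θ) :=
    intervalIntegral.integral_nonneg h3π (fun x _ => (Real.exp_pos _).le)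
  have h1 : π / 3 * Real.exp (z / 2) ≤ ∫ θ in (0:ℝ)..(π/3), Real.exp (z * Real.cos θ) := by
    have := intervalIntegral.integral_mono_on (f := fun _ : ℝ => Real.exp (z/2))
      (g := fun θ : ℝ => Real.exp (z * Real.cos θ)) h3
      (intervalIntegrable_const (μ := volume)) (hc.intervalIntegrable _ _) ?_
    · simpa using this
    · intro x hx
      apply Real.exp_le_exp.2
      have : Real.cos (π/3) ≤ Real.cos x :=
        Real.cos_le_cos_of_nonneg_of_le_pi hx.1 (by linarith [pi_pos]) hx.2
      rw [Real.cos_pi_div_three] at this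
      nlinarith
  linarith

lemma bJK_bound (z : ℝ) (hz : 0 < z) : bJ z - bK z ≤ bJ z / z + π := by
  have hS := bS_eq z
  have hKJ := bK_le_bJ z
  rw [bJ, bK] at *
  have hcE : Continuous fun θ : ℝ => Real.exp (z * Real.cos θ) := by fun_prop
  have hcD : Continuous fun θ : ℝ => (1 - Real.cos θ) * Real.exp (z * Real.cos θ) := by fun_prop
  have hcS : Continuous fun θ : ℝ => Real.sin θ ^ 2 * Real.exp (z * Real.cos θ) := by fun_prop
  have hπ2 : (0:ℝ) ≤ π/2 := by positivity
  have hπ2π : π/2 ≤ π := by linarith [pi_pos]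
  have hdiff : (∫ θ in (0:ℝ)..π, Real.exp (z * Real.cos θ))
      - (∫ θ in (0:ℝ)..π, Real.cos θ * Real.exp (z * Real.cos θ))
      = ∫ θ in (0:ℝ)..π, (1 - Real.cos θ) * Real.exp (z * Real.cos θ) := by
    rw [← intervalIntegral.integral_sub (hcE.intervalIntegrable _ _)
      ((by fun_prop : Continuous fun θ:ℝ =>
        Real.cos θ * Real.exp (z * Real.cos θ)).intervalIntegrable _ _)]
    exact intervalIntegral.integral_congr fun θ _ => by ring
  have hsplit : (∫ θ in (0:ℝ)..π, (1 - Real.cos θ) * Real.exp (z * Real.cos θ)) =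
      (∫ θ in (0:ℝ)..(π/2), (1 - Real.cos θ) * Real.exp (z * Real.cos θ))
        + ∫ θ in (π/2:ℝ)..π, (1 - Real.cos θ) * Real.exp (z * Real.cos θ) :=
    (intervalIntegral.integral_add_adjacent_intervals (hcD.intervalIntegrable _ _)
      (hcD.intervalIntegrable _ _)).symm
  have hP1 : (∫ θ in (0:ℝ)..(π/2), (1 - Real.cos θ) * Real.exp (z * Real.cos θ))
      ≤ ∫ θ in (0:ℝ)..(π/2), Real.sin θ ^ 2 * Real.exp (z * Real.cos θ) := by
    apply intervalIntegral.integral_mono_on hπ2 (hcD.intervalIntegrable _ _)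
      (hcS.intervalIntegrable _ _)
    intro x hx
    have h1 : 0 ≤ Real.cos x :=
      Real.cos_nonneg_of_mem_Icc ⟨by linarith [hx.1, pi_pos.le], hx.2⟩
    have h2 : Real.sin x ^ 2 = 1 - Real.cos x ^ 2 := Real.sin_sq x
    have h3 : 0 ≤ (1 - Real.cos x) * Real.cos x * Real.exp (z * Real.cos x) :=
      mul_nonneg (mul_nonneg (sub_nonneg.2 (Real.cos_le_one x)) h1) (Real.exp_pos _).le
    rw [h2]
    nlinarith [h3]
  have hS2 : (∫ θ in (0:ℝ)..(π/2), Real.sin θ ^ 2 * Real.exp (z * Real.cos θ))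
      ≤ ∫ θ in (0:ℝ)..π, Real.sin θ ^ 2 * Real.exp (z * Real.cos θ) := by
    have hsp : (∫ θ in (0:ℝ)..π, Real.sin θ ^ 2 * Real.exp (z * Real.cos θ)) =
        (∫ θ in (0:ℝ)..(π/2), Real.sin θ ^ 2 * Real.exp (z * Real.cos θ))
          + ∫ θ in (π/2:ℝ)..π, Real.sin θ ^ 2 * Real.exp (z * Real.cos θ) :=
      (intervalIntegral.integral_add_adjacent_intervals (hcS.intervalIntegrable _ _)
        (hcS.intervalIntegrable _ _)).symm
    have : (0:ℝ) ≤ ∫ θ in (π/2:ℝ)..π, Real.sin θ ^ 2 * Real.exp (z * Real.cos θ) :=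
      intervalIntegral.integral_nonneg hπ2π (fun x _ => by positivity)
    linarith
  have hP2 : (∫ θ in (π/2:ℝ)..π, (1 - Real.cos θ) * Real.exp (z * Real.cos θ)) ≤ π := by
    have := intervalIntegral.integral_mono_on (g := fun _ : ℝ => (2:ℝ)) hπ2π
      (hcD.intervalIntegrable _ _) (intervalIntegrable_const (μ := volume)) ?_
    · have h2 : (∫ _ in (π/2:ℝ)..π, (2:ℝ)) = π := by
        simp; ring
      linarith
    · intro x hx
      show (1 - Real.cos x) * Real.exp (z * Real.cos x) ≤ 2
      have hcx : Real.cos x ≤ 0 :=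
        Real.cos_nonpos_of_pi_div_two_le_of_le hx.1 (by linarith [pi_pos.le, hx.2])
      have he : Real.exp (z * Real.cos x) ≤ 1 := by
        rw [show (1:ℝ) = Real.exp 0 by simp]
        exact Real.exp_le_exp.2 (by nlinarith)
      have h4 : (1 - Real.cos x) * Real.exp (z * Real.cos x) ≤ 2 * 1 :=
        mul_le_mul (by linarith [Real.neg_one_le_cos x]) he (Real.exp_pos _).le (by norm_num)
      linarith
  have hSval : (∫ θ in (0:ℝ)..π, Real.sin θ ^ 2 * Real.exp (z * Real.cos θ))
      ≤ (∫ θ in (0:ℝ)..π, Real.exp (z * Real.cos θ)) / z := by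
    rw [le_div_iff₀ hz]
    rw [bS] at hS
    nlinarith
  linarith [hdiff, hsplit, hP1, hS2, hP2, hSval]

/-- The uniform bound `|z g'(z)| ≤ 9`. -/
lemma bessel_deriv_bound (z : ℝ) (hz : 0 < z) :
    |z * (1 - besselQuot z ^ 2 - besselQuot z / z)| ≤ 9 := by
  have hb : 0 < bJ z := bJ_pos z
  have ha : 0 ≤ bK z := bK_nonneg z hz.le
  have hab : bK z ≤ bJ z := bK_le_bJ z
  have hd : bJ z - bK z ≤ bJ z / z + π := bJK_bound z hz
  have hlow : π / 3 * z ≤ bJ z := by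
    have h1 := bJ_lower z hz.le
    have h2 := le_exp_half z
    nlinarith [pi_pos]
  set G := besselQuot z with hG
  have hGv : G = bK z / bJ z := besselQuot_eq z
  have hG0 : 0 ≤ G := by rw [hGv]; positivity
  have hG1 : G ≤ 1 := by rw [hGv]; exact (div_le_one hb).2 hab
  have h1 : z * (1 - G) ≤ 4 := by
    have e : z * (1 - G) = z * (bJ z - bK z) / bJ z := by
      rw [hGv]; field_simp
    have hzπ : z * π ≤ 3 * bJ z := by nlinarith [pi_pos]
    have h2 : z * (bJ z - bK z) ≤ 4 * bJ z := by
      have := mul_le_mul_of_nonneg_left hd hz.le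
      have e2 : z * (bJ z / z + π) = bJ z + z * π := by field_simp
      nlinarith
    rw [e, div_le_iff₀ hb]
    linarith
  have h2 : z * (1 - G ^ 2) ≤ 8 := by
    nlinarith [mul_le_mul_of_nonneg_right h1 (by linarith : (0:ℝ) ≤ 1 + G)]
  have h3 : 0 ≤ z * (1 - G ^ 2) := mul_nonneg hz.le (by nlinarith)
  have key : z * (1 - G ^ 2 - G / z) = z * (1 - G ^ 2) - G := by
    field_simp
  rw [key, abs_le]
  constructor <;> nlinarith

/-- The Bessel quotient `g = I₁/I₀` satisfies the ODE
`g'(z) = 1 - g(z)² - g(z)/z` for `z > 0` and `sup_{z>0} |z g'(z)| < ∞`;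
consequently `g_σ(t) := g(t/σ²)` is `C/δ`-Lipschitz on `[δ, ∞)`, uniformly in
`σ > 0`. -/
theorem bessel_quotient_ode_and_uniform_lipschitz :
    (∀ z : ℝ, 0 < z →
        deriv besselQuot z = 1 - besselQuot z ^ 2 - besselQuot z / z) ∧
      ∃ C : ℝ, (∀ z : ℝ, 0 < z → |z * deriv besselQuot z| ≤ C) ∧
        ∀ σ : ℝ, 0 < σ → ∀ δ : ℝ, 0 < δ → ∀ s t : ℝ, δ ≤ s → δ ≤ t →
          |besselQuot (s / σ ^ 2) - besselQuot (t / σ ^ 2)| ≤ C / δ * |s - t| := by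
  refine ⟨fun z hz => (hasDerivAt_besselQuot z hz).deriv, 9, fun z hz => ?_, ?_⟩
  · rw [(hasDerivAt_besselQuot z hz).deriv]
    exact bessel_deriv_bound z hz
  · intro σ hσ δ hδ s t hs ht
    have hσ2 : 0 < σ ^ 2 := by positivity
    have hder : ∀ x ∈ Ici δ, HasDerivWithinAt (fun u => besselQuot (u / σ ^ 2))
        ((1 - besselQuot (x / σ ^ 2) ^ 2 - besselQuot (x / σ ^ 2) / (x / σ ^ 2)) * (σ ^ 2)⁻¹)
        (Ici δ) x := by
      intro x hx
      have hx0 : 0 < x / σ ^ 2 := div_pos (lt_of_lt_of_le hδ hx) hσ2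
      have h1 : HasDerivAt (fun u : ℝ => u / σ ^ 2) ((σ ^ 2)⁻¹) x := by
        simpa using (hasDerivAt_id x).div_const (σ ^ 2)
      exact ((hasDerivAt_besselQuot _ hx0).comp x h1).hasDerivWithinAt
    have hbound : ∀ x ∈ Ici δ,
        ‖(1 - besselQuot (x / σ ^ 2) ^ 2 - besselQuot (x / σ ^ 2) / (x / σ ^ 2)) * (σ ^ 2)⁻¹‖
          ≤ 9 / δ := by
      intro x hx
      have hxpos : 0 < x := lt_of_lt_of_le hδ hx
      have hw : 0 < x / σ ^ 2 := div_pos hxpos hσ2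
      have hb := bessel_deriv_bound (x / σ ^ 2) hw
      set v := 1 - besselQuot (x / σ ^ 2) ^ 2 - besselQuot (x / σ ^ 2) / (x / σ ^ 2) with hv
      have h2 : (x / σ ^ 2) * |v| ≤ 9 := by
        rwa [abs_mul, abs_of_pos hw] at hb
      rw [Real.norm_eq_abs, abs_mul, abs_inv, abs_of_pos hσ2]
      rw [show |v| * (σ ^ 2)⁻¹ = |v| / σ ^ 2 by ring, div_le_div_iff₀ hσ2 hδ]
      have h3 : x * |v| ≤ 9 * σ ^ 2 := by
        rw [div_mul_eq_mul_div, div_le_iff₀ hσ2] at h2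
        linarith
      have hδx : δ ≤ x := hx
      nlinarith [abs_nonneg v]
    have := Convex.norm_image_sub_le_of_norm_hasDerivWithin_le hder hbound
      (convex_Ici δ) ht hs
    simpa [Real.norm_eq_abs] using this
end
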